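/- Suppose u : M × [t₀ - δ, t₀] → ℝ is given by u(x,t) = ∫_M G(x,t;y,t₀) w(y) dμ(y), where 0 ≤ w ≤ A, w is supported in a ball B(x₀, ρ), and G satisfies the upper bound G(x,t;y,t₀) ≤ C₁ (t₀-t)^{-n/2} exp(-c₂ d(x,y)²/(t₀-t)). Then there exist constants C₃, C₄ > 0 (depending on A, ρ, C₁, c₂, n, δ, and μ(B(x₀,ρ))) such that u(x,t) ≤ C₃ exp(-C₄ d(x,x₀)²) for all x with d(x,x₀) ≥ 2ρ and all t ∈ [t₀-δ, t₀). -/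

import Mathlib

open Real Metric MeasureTheory Set Function
open scoped Nat

/-!
For `y` in the support of `w` and `d(x, x₀) ≥ 2ρ` we have `d(x, y) ≥ d(x, x₀)/2`, so half of the
Gaussian factor `exp(-c₂ d(x,y)²/s)` is at most `exp(-c₂ρ²/(2s))`, which absorbs the blow-up
`s^(-n/2)` uniformly in `s > 0`, while the other half is at most `exp(-c₂ d(x,x₀)²/(8δ))` since
`s ≤ δ`. The integrand is thus bounded by a constant multiple of `exp(-c₂ d(x,x₀)²/(8δ))` on
`B(x₀, ρ)` and vanishes outside, and `μ(B(x₀, ρ)) < ∞` finishes the proof.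
-/

lemma pow_mul_exp_neg_mul_le (n : ℕ) {b r : ℝ} (hb : 0 < b) (hr : 0 ≤ r) :
    r ^ n * exp (-(b * r)) ≤ n ! / b ^ n := by
  have hexp := Real.pow_div_factorial_le_exp (x := b * r) (mul_nonneg hb.le hr) n
  rw [mul_pow, div_le_iff₀ (by positivity)] at hexp
  rw [exp_neg, ← div_eq_mul_inv, div_le_div_iff₀ (exp_pos _) (by positivity)]
  linarith

lemma rpow_neg_mul_exp_neg_div_le (n : ℕ) {p b s : ℝ} (hp : 0 ≤ p) (hpn : p ≤ n)
    (hb : 0 < b) (hs : 0 < s) :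
    s ^ (-p) * exp (-b / s) ≤ 1 + n ! / b ^ n := by
  have hfact : (0 : ℝ) ≤ n ! / b ^ n := by positivity
  rw [rpow_neg hs.le, ← inv_rpow hs.le, div_eq_mul_inv, neg_mul]
  set r := s⁻¹
  have hr : 0 < r := inv_pos.mpr hs
  rcases le_total r 1 with hr1 | hr1
  · have hexp : exp (-(b * r)) ≤ 1 := exp_le_one_iff.mpr (by nlinarith)
    nlinarith [rpow_le_one hr.le hr1 hp, exp_pos (-(b * r))]
  · calc r ^ p * exp (-(b * r)) ≤ r ^ n * exp (-(b * r)) := by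
          gcongr
          exact_mod_cast rpow_le_rpow_of_exponent_le hr1 hpn
      _ ≤ n ! / b ^ n := pow_mul_exp_neg_mul_le n hb hr.le
      _ ≤ 1 + n ! / b ^ n := by linarith

lemma exp_neg_mul_sq_div_le {c δ ρ s d r : ℝ} (hc : 0 ≤ c) (hρ : 0 ≤ ρ) (hs : 0 < s)
    (hsδ : s ≤ δ) (hd : 2 * ρ ≤ d) (hr : d / 2 ≤ r) :
    exp (-c * r ^ 2 / s) ≤ exp (-(c * ρ ^ 2 / 2) / s) * exp (-(c / (8 * δ)) * d ^ 2) := by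
  rw [← exp_add, exp_le_exp]
  have hρd : c * ρ ^ 2 / 2 / s ≤ c * d ^ 2 / 8 / s := by
    have : 4 * ρ ^ 2 ≤ d ^ 2 := by nlinarith
    gcongr ?_ / s
    nlinarith
  have hδs : c * d ^ 2 / 8 / δ ≤ c * d ^ 2 / 8 / s := by gcongr
  have hr2 : c * d ^ 2 / 8 / s + c * d ^ 2 / 8 / s ≤ c * r ^ 2 / s := by
    have : d ^ 2 / 4 ≤ r ^ 2 := by nlinarith
    rw [← add_div]
    gcongr
    nlinarith
  have hδ : c / (8 * δ) * d ^ 2 = c * d ^ 2 / 8 / δ := by ring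
  rw [neg_mul, neg_div, neg_div, neg_mul, hδ]
  linarith

lemma integral_le_mul_measureReal_of_le_indicator {α : Type*} [MeasurableSpace α]
    {μ : Measure α} {f : α → ℝ} {s : Set α} {c : ℝ} (hc : 0 ≤ c) (hs : μ s ≠ ⊤)
    (hf : ∀ x, f x ≤ s.indicator (fun _ ↦ c) x) :
    ∫ x, f x ∂μ ≤ c * μ.real s := by
  set S := toMeasurable μ s
  have hfS : ∀ x, f x ≤ S.indicator (fun _ ↦ c) x := fun x ↦
    (hf x).trans (indicator_le_indicator_of_subset (subset_toMeasurable μ s) (fun _ ↦ hc) x)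
  have hint : Integrable (S.indicator fun _ ↦ c) μ :=
    (integrable_indicator_iff (measurableSet_toMeasurable μ s)).mpr
      (integrableOn_const (by rwa [measure_toMeasurable]))
  calc ∫ x, f x ∂μ ≤ ∫ x, S.indicator (fun _ ↦ c) x ∂μ := by
        by_cases hfi : Integrable f μ
        · exact integral_mono hfi hint hfS
        · rw [integral_undef hfi]
          exact integral_nonneg (indicator_nonneg fun _ _ ↦ hc)
    _ = c * μ.real s := by
        rw [integral_indicator_const _ (measurableSet_toMeasurable μ s), smul_eq_mul,
          measureReal_def, measure_toMeasurable, measureReal_def, mul_comm]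

lemma rpow_neg_mul_exp_neg_dist_sq_div_le {M : Type*} [MetricSpace M] (n : ℕ)
    {c δ ρ s : ℝ} (hc : 0 < c) (hρ : 0 < ρ) (hs : 0 < s) (hsδ : s ≤ δ) {x x₀ y : M}
    (hx : 2 * ρ ≤ dist x x₀) (hy : y ∈ ball x₀ ρ) :
    s ^ (-((n : ℝ) / 2)) * exp (-c * dist x y ^ 2 / s) ≤
      (1 + n ! / (c * ρ ^ 2 / 2) ^ n) * exp (-(c / (8 * δ)) * dist x x₀ ^ 2) := by
  have hxy : dist x x₀ / 2 ≤ dist x y := by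
    linarith [dist_triangle x y x₀, mem_ball.mp hy]
  calc s ^ (-((n : ℝ) / 2)) * exp (-c * dist x y ^ 2 / s)
      ≤ s ^ (-((n : ℝ) / 2)) *
          (exp (-(c * ρ ^ 2 / 2) / s) * exp (-(c / (8 * δ)) * dist x x₀ ^ 2)) := by
        gcongr
        exact exp_neg_mul_sq_div_le hc.le hρ.le hs hsδ hx hxy
    _ = s ^ (-((n : ℝ) / 2)) * exp (-(c * ρ ^ 2 / 2) / s) *
          exp (-(c / (8 * δ)) * dist x x₀ ^ 2) := by ring
    _ ≤ (1 + n ! / (c * ρ ^ 2 / 2) ^ n) * exp (-(c / (8 * δ)) * dist x x₀ ^ 2) := by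
        gcongr
        exact rpow_neg_mul_exp_neg_div_le n (by positivity) (by linarith) (by positivity) hs

/-- Upper heat-kernel bound implies quadratic exponential spatial decay of
`u(x,t) = ∫ G(x,t;y,t₀) w(y) dμ(y)` for bounded `w` supported in a ball `B(x₀,ρ)`,
in the region `d(x,x₀) ≥ 2ρ`. -/
theorem conjugate_heat_solution_gaussian_decay {M : Type*} [MeasurableSpace M]
    [MetricSpace M] (μ : Measure M) (n : ℕ)
    (t₀ δ C₁ c₂ A ρ : ℝ) (hδ : 0 < δ) (hC₁ : 0 < C₁) (hc₂ : 0 < c₂)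
    (hA : 0 ≤ A) (hρ : 0 < ρ)
    (G : M → ℝ → M → ℝ) (w : M → ℝ) (u : M → ℝ → ℝ) (x₀ : M)
    (hu : ∀ x t, u x t = ∫ y, G x t y * w y ∂μ)
    (hw0 : ∀ y, 0 ≤ w y) (hwA : ∀ y, w y ≤ A)
    (hsupp : Function.support w ⊆ Metric.ball x₀ ρ)
    (hμB : μ (Metric.ball x₀ ρ) < ⊤)
    (hGup : ∀ x t y, t ∈ Set.Ico (t₀ - δ) t₀ →
      G x t y ≤ C₁ * (t₀ - t) ^ (-((n : ℝ) / 2)) *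
        Real.exp (-c₂ * dist x y ^ 2 / (t₀ - t))) :
    ∃ C₃ > (0:ℝ), ∃ C₄ > (0:ℝ), ∀ x t, 2 * ρ ≤ dist x x₀ →
      t ∈ Set.Ico (t₀ - δ) t₀ →
      u x t ≤ C₃ * Real.exp (-C₄ * dist x x₀ ^ 2) := by
  set K : ℝ := 1 + n ! / (c₂ * ρ ^ 2 / 2) ^ n
  refine ⟨C₁ * K * A * μ.real (ball x₀ ρ) + 1, by positivity, c₂ / (8 * δ), by positivity, ?_⟩
  intro x t hx ht
  set E := exp (-(c₂ / (8 * δ)) * dist x x₀ ^ 2)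
  have hG : ∀ y ∈ ball x₀ ρ, G x t y ≤ C₁ * K * E := fun y hy ↦ calc
    G x t y ≤ C₁ * ((t₀ - t) ^ (-((n : ℝ) / 2)) * exp (-c₂ * dist x y ^ 2 / (t₀ - t))) := by
        rw [← mul_assoc]; exact hGup x t y ht
    _ ≤ C₁ * (K * E) := mul_le_mul_of_nonneg_left
        (rpow_neg_mul_exp_neg_dist_sq_div_le n hc₂ hρ (sub_pos.mpr ht.2)
          (by linarith [ht.1]) hx hy) hC₁.le
    _ = C₁ * K * E := by ring
  have hGw : ∀ y, G x t y * w y ≤ (ball x₀ ρ).indicator (fun _ ↦ C₁ * K * A * E) y := by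
    intro y
    by_cases hy : y ∈ ball x₀ ρ
    · rw [indicator_of_mem hy]
      calc G x t y * w y ≤ C₁ * K * E * w y := mul_le_mul_of_nonneg_right (hG y hy) (hw0 y)
        _ ≤ C₁ * K * E * A := by gcongr; exact hwA y
        _ = C₁ * K * A * E := by ring
    · rw [indicator_of_notMem hy, notMem_support.mp (fun h ↦ hy (hsupp h)), mul_zero]
  calc u x t = ∫ y, G x t y * w y ∂μ := hu x t
    _ ≤ C₁ * K * A * E * μ.real (ball x₀ ρ) :=
        integral_le_mul_measureReal_of_le_indicator (by positivity) hμB.ne hGw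
    _ ≤ (C₁ * K * A * μ.real (ball x₀ ρ) + 1) * E := by
        have hE : 0 < E := exp_pos _
        nlinarith
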